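/- Let G be a finite simple graph with a leaf u whose unique neighbor is v, and suppose ϑ(G∖v) = ϑ(G) − 1. Then for every vertex w ∈ N_G(v) with w ≠ u, one has ϑ(G∖w) = ϑ(G). -/
import Mathlib


open MvPolynomial

noncomputable section

/-- A graph is bipartite if its vertex set can be partitioned into two parts such that
every edge joins the two parts. -/
def SimpleGraph.IsBipartiteGraph {V : Type*} (G : SimpleGraph V) : Prop :=
  ∃ A : Set V, ∀ ⦃a b : V⦄, G.Adj a b → (a ∈ A ∧ b ∉ A) ∨ (a ∉ A ∧ b ∈ A)

/-- The edge ideal of a graph `G`, generated by the monomials `X a * X b` over the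
edges `{a, b}` of `G`. -/
def edgeIdeal (K : Type*) [Field K] {V : Type*} (G : SimpleGraph V) :
    Ideal (MvPolynomial V K) :=
  Ideal.span {m | ∃ a b : V, G.Adj a b ∧ m = X a * X b}

/-- A finite set `M` of edges of `G` is an induced matching if the edges are pairwise
vertex-disjoint and the induced subgraph of `G` on the vertices of the edges of `M`
has no edges other than those of `M`. -/
def SimpleGraph.IsInducedMatching {V : Type*} (G : SimpleGraph V)
    (M : Finset (Sym2 V)) : Prop :=
  (∀ e ∈ M, e ∈ G.edgeSet) ∧
  (∀ e ∈ M, ∀ f ∈ M, e ≠ f → ∀ v : V, ¬ (v ∈ e ∧ v ∈ f)) ∧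
  (∀ e ∈ G.edgeSet, (∀ v ∈ e, ∃ f ∈ M, v ∈ f) → e ∈ M)

/-- The induced matching number `ϑ(G)`: the maximum size of an induced matching of `G`. -/
def indMatchNum {V : Type*} (G : SimpleGraph V) : ℕ :=
  sSup {n : ℕ | ∃ M : Finset (Sym2 V), G.IsInducedMatching M ∧ M.card = n}

/-- The depth (with respect to the graded maximal ideal generated by the variables) of the
quotient of the polynomial ring `K[x_v : v ∈ V]` by an ideal `I`: the supremum of the lengths
of regular sequences on the quotient consisting of elements of the graded maximal ideal. -/
def quotDepth (K : Type*) [Field K] {V : Type*} (I : Ideal (MvPolynomial V K)) : ℕ :=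
  sSup {n : ℕ | ∃ rs : List (MvPolynomial V K), rs.length = n ∧
    (∀ r ∈ rs, r ∈ Ideal.span (Set.range (X : V → MvPolynomial V K))) ∧
    RingTheory.Sequence.IsRegular (MvPolynomial V K ⧸ I) rs}

section helpers
variable {V : Type*} (G : SimpleGraph V)

lemma empty_im : G.IsInducedMatching ∅ := by
  refine ⟨by simp, by simp, ?_⟩
  intro e he h
  induction e using Sym2.ind with
  | _ a b =>
    obtain ⟨f, hf, -⟩ := h a (by simp)
    exact absurd hf (Finset.notMem_empty f)

lemma im_set_nonempty : {n : ℕ | ∃ M : Finset (Sym2 V), G.IsInducedMatching M ∧ M.card = n}.Nonempty :=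
  ⟨0, ∅, empty_im G, rfl⟩

lemma im_set_bdd [Fintype V] :
    BddAbove {n : ℕ | ∃ M : Finset (Sym2 V), G.IsInducedMatching M ∧ M.card = n} := by
  classical
  exact ⟨Fintype.card (Sym2 V), fun n ⟨M, _, hc⟩ => hc ▸ Finset.card_le_univ M⟩

lemma exists_max_im [Fintype V] :
    ∃ M : Finset (Sym2 V), G.IsInducedMatching M ∧ M.card = indMatchNum G :=
  Nat.sSup_mem (im_set_nonempty G) (im_set_bdd G)

lemma card_le_indMatchNum [Fintype V] {M : Finset (Sym2 V)} (h : G.IsInducedMatching M) :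
    M.card ≤ indMatchNum G :=
  le_csSup (im_set_bdd G) ⟨M, h, rfl⟩

end helpers

section transfer
variable {V : Type*} {G : SimpleGraph V} {S : Set V}

/-- Transfer an induced matching of an induced subgraph up to the ambient graph. -/
lemma transfer_up (M : Finset (Sym2 ↥S)) (h : (G.induce S).IsInducedMatching M) :
    ∃ N : Finset (Sym2 V), G.IsInducedMatching N ∧ N.card = M.card ∧
      (∀ e ∈ N, ∀ z ∈ e, z ∈ S) := by
  classical
  obtain ⟨h1, h2, h3⟩ := h
  refine ⟨M.image (Sym2.map Subtype.val), ⟨?_, ?_, ?_⟩, ?_, ?_⟩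
  · intro e he
    obtain ⟨f, hf, rfl⟩ := Finset.mem_image.1 he
    induction f using Sym2.ind with
    | _ a b =>
      have := h1 _ hf
      rw [SimpleGraph.mem_edgeSet] at this
      rw [Sym2.map_pair_eq, SimpleGraph.mem_edgeSet]
      exact this
  · intro e he f hf hef z hz
    obtain ⟨e', he', rfl⟩ := Finset.mem_image.1 he
    obtain ⟨f', hf', rfl⟩ := Finset.mem_image.1 hf
    have hef' : e' ≠ f' := fun hh => hef (by rw [hh])
    obtain ⟨x, hx, hxz⟩ := Sym2.mem_map.1 hz.1
    obtain ⟨y, hy, hyz⟩ := Sym2.mem_map.1 hz.2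
    have hxy : x = y := Subtype.ext (hxz.trans hyz.symm)
    exact h2 e' he' f' hf' hef' x ⟨hx, hxy ▸ hy⟩
  · intro e he hcov
    induction e using Sym2.ind with
    | _ a b =>
      rw [SimpleGraph.mem_edgeSet] at he
      have haS : a ∈ S := by
        obtain ⟨f, hf, haf⟩ := hcov a (by simp)
        obtain ⟨f', hf', rfl⟩ := Finset.mem_image.1 hf
        obtain ⟨x, -, hxa⟩ := Sym2.mem_map.1 haf
        exact hxa ▸ x.2
      have hbS : b ∈ S := by
        obtain ⟨f, hf, hbf⟩ := hcov b (by simp)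
        obtain ⟨f', hf', rfl⟩ := Finset.mem_image.1 hf
        obtain ⟨x, -, hxb⟩ := Sym2.mem_map.1 hbf
        exact hxb ▸ x.2
      have hmem : s(⟨a, haS⟩, ⟨b, hbS⟩) ∈ M := by
        apply h3
        · rw [SimpleGraph.mem_edgeSet]; simpa using he
        · intro z hz
          have hzv : (z : V) ∈ s(a, b) := by
            rcases Sym2.mem_iff.1 hz with h | h <;> rw [h] <;> simp
          obtain ⟨f, hf, hzf⟩ := hcov _ hzv
          obtain ⟨f', hf', rfl⟩ := Finset.mem_image.1 hf
          obtain ⟨x, hx, hxz⟩ := Sym2.mem_map.1 hzf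
          exact ⟨f', hf', (Subtype.ext hxz : x = z) ▸ hx⟩
      refine Finset.mem_image.2 ⟨_, hmem, ?_⟩
      rw [Sym2.map_pair_eq]
  · exact Finset.card_image_of_injective _ (Sym2.map.injective Subtype.val_injective)
  · intro e he z hz
    obtain ⟨f, hf, rfl⟩ := Finset.mem_image.1 he
    obtain ⟨x, -, hxz⟩ := Sym2.mem_map.1 hz
    exact hxz ▸ x.2

lemma indMatchNum_induce_le [Fintype V] (G : SimpleGraph V) (S : Set V) :
    indMatchNum (G.induce S) ≤ indMatchNum G := by
  classical
  obtain ⟨M, hM, hc⟩ := exists_max_im (G.induce S)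
  obtain ⟨N, hN, hcard, -⟩ := transfer_up M hM
  calc indMatchNum (G.induce S) = N.card := by rw [hcard, hc]
    _ ≤ indMatchNum G := card_le_indMatchNum G hN

/-- Transfer an induced matching avoiding `Sᶜ` down to the induced subgraph. -/
lemma transfer_down (u0 : V) (hu0 : u0 ∈ S) (M : Finset (Sym2 V))
    (hM : G.IsInducedMatching M) (hS : ∀ e ∈ M, ∀ z ∈ e, z ∈ S) :
    ∃ N : Finset (Sym2 ↥S), (G.induce S).IsInducedMatching N ∧ N.card = M.card := by
  classical
  obtain ⟨h1, h2, h3⟩ := hM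
  set g : V → ↥S := fun x => if h : x ∈ S then ⟨x, h⟩ else ⟨u0, hu0⟩ with hg
  have hval : ∀ z ∈ S, (g z : V) = z := fun z hz => by simp [hg, hz]
  have hback : ∀ e ∈ M, Sym2.map Subtype.val (Sym2.map g e) = e := by
    intro e he
    induction e using Sym2.ind with
    | _ a b =>
      rw [Sym2.map_pair_eq, Sym2.map_pair_eq,
        hval a (hS _ he a (by simp)), hval b (hS _ he b (by simp))]
  have hmemval : ∀ e ∈ M, ∀ z : ↥S, z ∈ Sym2.map g e → (z : V) ∈ e := by
    intro e he z hz
    obtain ⟨x, hx, hxz⟩ := Sym2.mem_map.1 hz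
    have : (z : V) = x := by rw [← hxz, hval x (hS _ he x hx)]
    exact this ▸ hx
  refine ⟨M.image (Sym2.map g), ⟨?_, ?_, ?_⟩, ?_⟩
  · intro e he
    obtain ⟨f, hf, rfl⟩ := Finset.mem_image.1 he
    induction f using Sym2.ind with
    | _ a b =>
      have hadj := (SimpleGraph.mem_edgeSet _).1 (h1 _ hf)
      rw [Sym2.map_pair_eq, SimpleGraph.mem_edgeSet]
      have ha := hval a (hS _ hf a (by simp))
      have hb := hval b (hS _ hf b (by simp))
      simp only [SimpleGraph.comap_adj, Function.Embedding.coe_subtype, ha, hb]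
      exact hadj
  · intro e he f hf hef z hz
    obtain ⟨e', he', rfl⟩ := Finset.mem_image.1 he
    obtain ⟨f', hf', rfl⟩ := Finset.mem_image.1 hf
    have hef' : e' ≠ f' := by
      intro hh; exact hef (by rw [hh])
    exact h2 e' he' f' hf' hef' (z : V) ⟨hmemval e' he' z hz.1, hmemval f' hf' z hz.2⟩
  · intro e he hcov
    induction e using Sym2.ind with
    | _ a b =>
      have hadj : G.Adj (a : V) (b : V) := by
        have := (SimpleGraph.mem_edgeSet _).1 he
        simpa using this
      have hcov' : ∀ z ∈ s((a : V), (b : V)), ∃ f ∈ M, z ∈ f := by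
        intro z hz
        rcases Sym2.mem_iff.1 hz with h | h
        · obtain ⟨f, hf, haf⟩ := hcov a (by simp)
          obtain ⟨f', hf', rfl⟩ := Finset.mem_image.1 hf
          exact ⟨f', hf', h ▸ hmemval f' hf' a haf⟩
        · obtain ⟨f, hf, hbf⟩ := hcov b (by simp)
          obtain ⟨f', hf', rfl⟩ := Finset.mem_image.1 hf
          exact ⟨f', hf', h ▸ hmemval f' hf' b hbf⟩
      have hmem : s((a : V), (b : V)) ∈ M := h3 _ ((SimpleGraph.mem_edgeSet _).2 hadj) hcov'
      refine Finset.mem_image.2 ⟨_, hmem, ?_⟩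
      rw [Sym2.map_pair_eq]
      rw [show g ↑a = a from Subtype.ext (hval _ a.2), show g ↑b = b from Subtype.ext (hval _ b.2)]
  · apply Finset.card_image_of_injOn
    intro e he f hf hef
    rw [← hback e he, ← hback f hf, hef]

end transfer

/-- Let `G` be a finite simple graph with a leaf `u` whose unique neighbor is `v`, and
suppose `ϑ(G ∖ v) = ϑ(G) - 1`. Then for every vertex `w ∈ N_G(v)` with `w ≠ u`, one has
`ϑ(G ∖ w) = ϑ(G)`. -/
theorem indMatchNum_delete_neighbor {V : Type*} [Fintype V] (G : SimpleGraph V)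
    (u v : V) (hNu : G.neighborSet u = {v})
    (hth : indMatchNum (G.induce {z : V | z ≠ v}) = indMatchNum G - 1)
    (w : V) (hw : w ∈ G.neighborSet v) (hwu : w ≠ u) :
    indMatchNum (G.induce {z : V | z ≠ w}) = indMatchNum G := by
  classical
  have huv : G.Adj u v := by
    have : v ∈ G.neighborSet u := by rw [hNu]; rfl
    exact this
  have hvw : G.Adj v w := hw
  have hne_uv : u ≠ v := huv.ne
  have hne_vw : v ≠ w := hvw.ne
  have hleaf : ∀ y, G.Adj u y → y = v := by
    intro y hy
    have : y ∈ G.neighborSet u := hy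
    rw [hNu] at this
    exact this
  -- the single edge s(u,v) is an induced matching
  have hsingle : G.IsInducedMatching {s(u, v)} := by
    refine ⟨?_, ?_, ?_⟩
    · intro e he
      rw [Finset.mem_singleton] at he
      subst he
      exact (SimpleGraph.mem_edgeSet _).2 huv
    · intro e he f hf hef
      rw [Finset.mem_singleton] at he hf
      exact absurd (he.trans hf.symm) hef
    · intro e he hcov
      rw [Finset.mem_singleton]
      induction e using Sym2.ind with
      | _ a b =>
        have hadj := (SimpleGraph.mem_edgeSet _).1 he
        obtain ⟨f, hf, haf⟩ := hcov a (by simp)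
        rw [Finset.mem_singleton] at hf
        subst hf
        rcases Sym2.mem_iff.1 haf with rfl | rfl
        · rw [hleaf b hadj]
        · obtain ⟨f, hf, hbf⟩ := hcov b (by simp)
          rw [Finset.mem_singleton] at hf
          subst hf
          rcases Sym2.mem_iff.1 hbf with rfl | rfl
          · rw [hleaf a hadj.symm, Sym2.eq_swap]
          · exact absurd rfl hadj.ne
  have hone : 1 ≤ indMatchNum G := by
    have := card_le_indMatchNum G hsingle
    simpa using this
  obtain ⟨M, hM, hMc⟩ := exists_max_im G
  obtain ⟨h1M, h2M, h3M⟩ := id hM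
  -- any matching edge containing u is s(u,v)
  have hucov : ∀ f ∈ M, u ∈ f → f = s(u, v) := by
    intro f hf huf
    have hfE := h1M f hf
    induction f using Sym2.ind with
    | _ a b =>
      have hadj := (SimpleGraph.mem_edgeSet _).1 hfE
      rcases Sym2.mem_iff.1 huf with rfl | rfl
      · rw [hleaf b hadj]
      · rw [hleaf a hadj.symm, Sym2.eq_swap]
  refine le_antisymm (indMatchNum_induce_le G _) ?_
  -- it suffices to find a maximum induced matching avoiding w
  suffices hsuf : ∃ N : Finset (Sym2 V), G.IsInducedMatching N ∧ N.card = M.card ∧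
      (∀ e ∈ N, ∀ z ∈ e, z ∈ {z : V | z ≠ w}) by
    obtain ⟨N, hN, hNc, hNa⟩ := hsuf
    obtain ⟨N', hN', hNc'⟩ := transfer_down u (show u ∈ {z : V | z ≠ w} from hwu.symm) N hN hNa
    calc indMatchNum G = N'.card := by rw [hNc', hNc, hMc]
      _ ≤ _ := card_le_indMatchNum _ hN'
  by_cases hwcov : ∃ f ∈ M, w ∈ f
  · obtain ⟨f0, hf0, hwf0⟩ := hwcov
    by_cases hvcov : ∃ f ∈ M, v ∈ f
    · -- the edge s(v,w) must be in M
      have hvwM : s(v, w) ∈ M := by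
        apply h3M _ ((SimpleGraph.mem_edgeSet _).2 hvw)
        intro z hz
        rcases Sym2.mem_iff.1 hz with rfl | rfl
        · exact hvcov
        · exact ⟨f0, hf0, hwf0⟩
      have hne_e : s(u, v) ≠ s(v, w) := by
        intro hh
        rw [Sym2.eq_iff] at hh
        rcases hh with ⟨h', -⟩ | ⟨h', -⟩
        · exact hne_uv h'
        · exact hwu h'.symm
      have huvnM : s(u, v) ∉ M := by
        intro h
        exact h2M _ h _ hvwM hne_e v ⟨by simp, by simp⟩
      -- swap s(v,w) for s(u,v)
      refine ⟨insert s(u, v) (M.erase s(v, w)), ⟨?_, ?_, ?_⟩, ?_, ?_⟩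
      · intro e he
        rcases Finset.mem_insert.1 he with rfl | hee
        · exact (SimpleGraph.mem_edgeSet _).2 huv
        · exact h1M e (Finset.mem_of_mem_erase hee)
      · intro e he f hf hef z hz
        rcases Finset.mem_insert.1 he with rfl | hee
        · rcases Finset.mem_insert.1 hf with rfl | hff
          · exact hef rfl
          · rcases Sym2.mem_iff.1 hz.1 with rfl | rfl
            · exact huvnM (hucov f (Finset.mem_of_mem_erase hff) hz.2 ▸
                Finset.mem_of_mem_erase hff)
            · exact h2M f (Finset.mem_of_mem_erase hff) _ hvwM
                (Finset.ne_of_mem_erase hff) z ⟨hz.2, by simp⟩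
        · rcases Finset.mem_insert.1 hf with rfl | hff
          · rcases Sym2.mem_iff.1 hz.2 with rfl | rfl
            · exact huvnM (hucov e (Finset.mem_of_mem_erase hee) hz.1 ▸
                Finset.mem_of_mem_erase hee)
            · exact h2M e (Finset.mem_of_mem_erase hee) _ hvwM
                (Finset.ne_of_mem_erase hee) z ⟨hz.1, by simp⟩
          · exact h2M e (Finset.mem_of_mem_erase hee) f (Finset.mem_of_mem_erase hff) hef z hz
      · intro e he hcov
        induction e using Sym2.ind with
        | _ a b =>
          have hadj := (SimpleGraph.mem_edgeSet _).1 he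
          by_cases hau : a = u
          · subst hau
            rw [hleaf b hadj]
            exact Finset.mem_insert_self _ _
          by_cases hbu : b = u
          · subst hbu
            rw [hleaf a hadj.symm, Sym2.eq_swap]
            exact Finset.mem_insert_self _ _
          have key : ∀ z, z ∈ s(a, b) → z ≠ u → (∃ f ∈ M.erase s(v, w), z ∈ f) ∨ z = v := by
            intro z hzm hzu
            obtain ⟨f, hfN, hzf⟩ := hcov z hzm
            rcases Finset.mem_insert.1 hfN with rfl | hf
            · rcases Sym2.mem_iff.1 hzf with rfl | rfl
              · exact absurd rfl hzu
              · exact Or.inr rfl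
            · exact Or.inl ⟨f, hf, hzf⟩
          rcases key a (by simp) hau with ⟨fa, hfa, hafa⟩ | hav
          · rcases key b (by simp) hbu with ⟨fb, hfb, hbfb⟩ | hbv
            · -- both a and b covered by M.erase s(v,w)
              have heM : s(a, b) ∈ M := by
                apply h3M _ he
                intro z hz
                rcases Sym2.mem_iff.1 hz with rfl | rfl
                · exact ⟨fa, Finset.mem_of_mem_erase hfa, hafa⟩
                · exact ⟨fb, Finset.mem_of_mem_erase hfb, hbfb⟩
              have hnesvw : s(a, b) ≠ s(v, w) := by
                intro hh
                have hwe : w ∈ s(a, b) := by rw [hh]; simp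
                rcases Sym2.mem_iff.1 hwe with ha | hb
                · exact h2M fa (Finset.mem_of_mem_erase hfa) _ hvwM
                    (Finset.ne_of_mem_erase hfa) w ⟨by rw [ha]; exact hafa, by simp⟩
                · exact h2M fb (Finset.mem_of_mem_erase hfb) _ hvwM
                    (Finset.ne_of_mem_erase hfb) w ⟨by rw [hb]; exact hbfb, by simp⟩
              exact Finset.mem_insert_of_mem (Finset.mem_erase.2 ⟨hnesvw, heM⟩)
            · -- b = v, a covered by M.erase, impossible
              exfalso
              have heM : s(a, b) ∈ M := by
                apply h3M _ he
                intro z hz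
                rcases Sym2.mem_iff.1 hz with rfl | rfl
                · exact ⟨fa, Finset.mem_of_mem_erase hfa, hafa⟩
                · exact ⟨s(v, w), hvwM, by rw [hbv]; simp⟩
              by_cases heq : s(a, b) = s(v, w)
              · have haw : a = w := by
                  rw [Sym2.eq_iff] at heq
                  rcases heq with ⟨h1, h2⟩ | ⟨h1, h2⟩
                  · exact absurd (hbv.symm.trans h2) hne_vw
                  · exact h1
                exact h2M fa (Finset.mem_of_mem_erase hfa) _ hvwM
                  (Finset.ne_of_mem_erase hfa) w ⟨by rw [← haw]; exact hafa, by simp⟩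
              · exact h2M _ heM _ hvwM heq v ⟨by rw [← hbv]; simp, by simp⟩
          · rcases key b (by simp) hbu with ⟨fb, hfb, hbfb⟩ | hbv
            · exfalso
              have heM : s(a, b) ∈ M := by
                apply h3M _ he
                intro z hz
                rcases Sym2.mem_iff.1 hz with rfl | rfl
                · exact ⟨s(v, w), hvwM, by rw [hav]; simp⟩
                · exact ⟨fb, Finset.mem_of_mem_erase hfb, hbfb⟩
              by_cases heq : s(a, b) = s(v, w)
              · have hbw : b = w := by
                  rw [Sym2.eq_iff] at heq
                  rcases heq with ⟨h1, h2⟩ | ⟨h1, h2⟩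
                  · exact h2
                  · exact absurd (hav.symm.trans h1) hne_vw
                exact h2M fb (Finset.mem_of_mem_erase hfb) _ hvwM
                  (Finset.ne_of_mem_erase hfb) w ⟨by rw [← hbw]; exact hbfb, by simp⟩
              · exact h2M _ heM _ hvwM heq v ⟨by rw [← hav]; simp, by simp⟩
            · exact absurd (hav.trans hbv.symm) hadj.ne
      · -- cardinality
        have hnm : s(u, v) ∉ M.erase s(v, w) := fun h => huvnM (Finset.mem_of_mem_erase h)
        rw [Finset.card_insert_of_notMem hnm, Finset.card_erase_of_mem hvwM]
        have : 0 < M.card := Finset.card_pos.2 ⟨_, hvwM⟩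
        omega
      · -- avoids w
        intro e he z hz
        rcases Finset.mem_insert.1 he with rfl | hee
        · intro hzw
          rcases Sym2.mem_iff.1 hz with h | h
          · exact hwu ((h.symm.trans hzw).symm)
          · exact hne_vw (h.symm.trans hzw)
        · intro hzw
          subst hzw
          exact h2M e (Finset.mem_of_mem_erase hee) _ hvwM
            (Finset.ne_of_mem_erase hee) z ⟨hz, by simp⟩
    · -- v not covered by M: contradicts the hypothesis on G ∖ v
      exfalso
      have hMav : ∀ e ∈ M, ∀ z ∈ e, z ∈ {z : V | z ≠ v} := by
        intro e he z hz hzv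
        exact hvcov ⟨e, he, hzv ▸ hz⟩
      obtain ⟨N', hN', hNc'⟩ := transfer_down u (show u ∈ {z : V | z ≠ v} from hne_uv) M hM hMav
      have hle : indMatchNum G ≤ indMatchNum (G.induce {z : V | z ≠ v}) := by
        calc indMatchNum G = N'.card := by rw [hNc', hMc]
          _ ≤ _ := card_le_indMatchNum _ hN'
      rw [hth] at hle
      omega
  · -- w not covered by M: M itself works
    refine ⟨M, hM, rfl, ?_⟩
    intro e he z hz hzw
    exact hwcov ⟨e, he, hzw ▸ hz⟩

end
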